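/- Let λ be a real parameter and let u, q : ℝ⁴ → ℝ be smooth functions of (t,x,y,z) with q_x nowhere vanishing, satisfying the Lax pair q_y = λ u_y q_x and q_z = λ(u_z q_x − q_t). Then q satisfies the modified Martínez Alonso–Shabat equation q_y q_{xz} + λ q_x q_{ty} − (q_z + λ q_t) q_{xy} = 0. -/

import Mathlib

noncomputable def pd (n : ℕ) (i : Fin n) (f : (Fin n → ℝ) → ℝ) : (Fin n → ℝ) → ℝ :=
  fun p => fderiv ℝ f p (Pi.single i 1)

lemma contDiff_pd {f : (Fin 4 → ℝ) → ℝ} (hf : ContDiff ℝ (⊤ : ℕ∞) f) (i : Fin 4) :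
    ContDiff ℝ (⊤ : ℕ∞) (pd 4 i f) := by
  have h1 : ContDiff ℝ (⊤ : ℕ∞) (fderiv ℝ f) := hf.fderiv_right (by simp)
  exact (ContinuousLinearMap.apply ℝ ℝ (Pi.single i 1 : Fin 4 → ℝ)).contDiff.comp h1

lemma pd_comm {f : (Fin 4 → ℝ) → ℝ} (hf : ContDiff ℝ (⊤ : ℕ∞) f) (i j : Fin 4)
    (p : Fin 4 → ℝ) : pd 4 i (pd 4 j f) p = pd 4 j (pd 4 i f) p := by
  have hdf : ContDiff ℝ (⊤ : ℕ∞) (fderiv ℝ f) := hf.fderiv_right (by simp)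
  have key : ∀ (v w : Fin 4 → ℝ),
      fderiv ℝ (fun x => fderiv ℝ f x v) p w = fderiv ℝ (fderiv ℝ f) p w v := by
    intro v w
    rw [fderiv_clm_apply (hdf.differentiable (by simp) p)
      (differentiableAt_const v)]
    simp
  have hsymm := ((hf.contDiffAt (x := p)).isSymmSndFDerivAt (n := (⊤ : ℕ∞)) (by rw [minSmoothness_of_isRCLikeNormedField]; exact WithTop.coe_le_coe.mpr (le_top : (2 : ℕ∞) ≤ ⊤)))
  have hj : pd 4 j f = fun x => fderiv ℝ f x (Pi.single j 1) := rfl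
  have hi : pd 4 i f = fun x => fderiv ℝ f x (Pi.single i 1) := rfl
  simp only [pd, hj, hi]
  rw [key, key]; exact hsymm _ _

lemma pd_mul {f g : (Fin 4 → ℝ) → ℝ} (hf : ContDiff ℝ (⊤ : ℕ∞) f) (hg : ContDiff ℝ (⊤ : ℕ∞) g)
    (i : Fin 4) (p : Fin 4 → ℝ) :
    pd 4 i (fun x => f x * g x) p = pd 4 i f p * g p + f p * pd 4 i g p := by
  simp only [pd]
  rw [fderiv_fun_mul (hf.differentiable (by simp) p)
    (hg.differentiable (by simp) p)]
  simp [mul_comm]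
  ring

lemma pd_const_mul {f : (Fin 4 → ℝ) → ℝ} (hf : ContDiff ℝ (⊤ : ℕ∞) f) (c : ℝ)
    (i : Fin 4) (p : Fin 4 → ℝ) :
    pd 4 i (fun x => c * f x) p = c * pd 4 i f p := by
  simp only [pd]
  rw [fderiv_const_mul (hf.differentiable (by simp) p)]
  simp

lemma pd_sub {f g : (Fin 4 → ℝ) → ℝ} (hf : ContDiff ℝ (⊤ : ℕ∞) f) (hg : ContDiff ℝ (⊤ : ℕ∞) g)
    (i : Fin 4) (p : Fin 4 → ℝ) :
    pd 4 i (fun x => f x - g x) p = pd 4 i f p - pd 4 i g p := by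
  simp only [pd]
  rw [fderiv_fun_sub (hf.differentiable (by simp) p)
    (hg.differentiable (by simp) p)]
  simp

/-- 4D coordinates `(t,x,y,z) = (0,1,2,3)`. Eliminating `u` from the Lax pair
`q_y = λ u_y q_x`, `q_z = λ(u_z q_x − q_t)` yields the modified Martínez Alonso–Shabat
equation `q_y q_xz + λ q_x q_ty − (q_z + λ q_t) q_xy = 0`. -/
theorem stmt_5 (u q : (Fin 4 → ℝ) → ℝ) (hu : ContDiff ℝ (⊤ : ℕ∞) u) (hq : ContDiff ℝ (⊤ : ℕ∞) q)
    (lam : ℝ) (hlam : lam ≠ 0)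
    (hqx : ∀ p, pd 4 1 q p ≠ 0)
    (h1 : ∀ p, pd 4 2 q p = lam * pd 4 2 u p * pd 4 1 q p)
    (h2 : ∀ p, pd 4 3 q p = lam * (pd 4 3 u p * pd 4 1 q p - pd 4 0 q p)) :
    ∀ p, pd 4 2 q p * pd 4 3 (pd 4 1 q) p
        + lam * pd 4 1 q p * pd 4 2 (pd 4 0 q) p
        - (pd 4 3 q p + lam * pd 4 0 q p) * pd 4 2 (pd 4 1 q) p = 0 := by
  intro p
  have hu2 := contDiff_pd hu 2
  have hu3 := contDiff_pd hu 3
  have hq0 := contDiff_pd hq 0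
  have hq1 := contDiff_pd hq 1
  -- differentiate h1 in z (index 3)
  have e1 : pd 4 3 (pd 4 2 q) p
      = lam * (pd 4 3 (pd 4 2 u) p * pd 4 1 q p + pd 4 2 u p * pd 4 3 (pd 4 1 q) p) := by
    have : pd 4 2 q = fun x => lam * (pd 4 2 u x * pd 4 1 q x) := by
      funext x; rw [h1 x]; ring
    rw [this, pd_const_mul (hu2.mul hq1) lam 3 p, pd_mul hu2 hq1 3 p]
  -- differentiate h2 in y (index 2)
  have e2 : pd 4 2 (pd 4 3 q) p
      = lam * (pd 4 2 (pd 4 3 u) p * pd 4 1 q p + pd 4 3 u p * pd 4 2 (pd 4 1 q) p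
          - pd 4 2 (pd 4 0 q) p) := by
    have : pd 4 3 q = fun x => lam * (pd 4 3 u x * pd 4 1 q x - pd 4 0 q x) := by
      funext x; rw [h2 x]
    rw [this, pd_const_mul ((hu3.mul hq1).sub hq0) lam 2 p,
      pd_sub (hu3.mul hq1) hq0 2 p, pd_mul hu3 hq1 2 p]
  have cq : pd 4 3 (pd 4 2 q) p = pd 4 2 (pd 4 3 q) p := pd_comm hq 3 2 p
  have cu : pd 4 3 (pd 4 2 u) p = pd 4 2 (pd 4 3 u) p := pd_comm hu 3 2 p
  have key : lam * pd 4 2 u p * pd 4 3 (pd 4 1 q) p + lam * pd 4 2 (pd 4 0 q) p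
      - lam * pd 4 3 u p * pd 4 2 (pd 4 1 q) p = 0 := by
    have := cq
    rw [e1, e2, cu] at this
    linarith [this]
  linear_combination (pd 4 1 q p) * key + (pd 4 3 (pd 4 1 q) p) * h1 p
    - (pd 4 2 (pd 4 1 q) p) * h2 p
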